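/- arXiv:math/9202204 — 6 statements merged into one kernel-verified Lean document; each statement's English description precedes it below -/
import Mathlib

section
/- If $(f_n)_{n=1}^m$ is a finite sequence of norm-one real-valued functions on a set $K$, $\delta > 0$, and for each $n$ there is a real number $r_n$ such that, setting $A_n = \{k \in K : f_n(k) \ge r_n + \delta\}$ and $B_n = \{k \in K : f_n(k) \le r_n\}$, the family of pairs $\{(A_n, B_n)\}_{n=1}^m$ is Boolean independent (i.e., for every choice $(\epsilon_1,\ldots,\epsilon_m) \in \{-1,1\}^m$ the intersection $\bigcap_{i=1}^m \epsilon_i A_{n_i}$ is nonempty, where $(-1)A_i = B_i$), then for all scalars $(a_n)_{n=1}^m$ we have $\sup_{k \in K} |\sum_{n=1}^m a_n f_n(k)| \ge (\delta/2) \sum_{n=1}^m |a_n|$, i.e., $(f_n)$ is $2/\delta$-equivalent to the unit vector basis of $\ell^1_m$. -/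
/-- Rosenthal's lemma on Boolean independent pairs of level sets:
a finite sequence of norm-one functions whose level-set pairs are Boolean
independent is `2/δ`-equivalent to the unit vector basis of `ℓ¹_m`. -/
theorem stmt_0 {K : Type*} (m : ℕ) (f : Fin m → K → ℝ) (δ : ℝ) (hδ : 0 < δ)
    (r : Fin m → ℝ)
    (hnorm : ∀ n : Fin m, IsLUB (Set.range fun k => |f n k|) 1)
    (hBI : ∀ ε : Fin m → Bool,
      (⋂ n : Fin m,
        (if ε n then {k : K | r n + δ ≤ f n k} else {k : K | f n k ≤ r n})).Nonempty) :
    ∀ a : Fin m → ℝ, ∃ k : K,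
      (δ / 2) * ∑ n : Fin m, |a n| ≤ |∑ n : Fin m, a n * f n k| := by
  intro a
  set ε : Fin m → Bool := fun n => decide (0 ≤ a n) with hε
  obtain ⟨k₁, hk₁⟩ := hBI ε
  obtain ⟨k₂, hk₂⟩ := hBI (fun n => !(ε n))
  simp only [Set.mem_iInter] at hk₁ hk₂
  have key : ∀ n : Fin m, δ * |a n| ≤ a n * f n k₁ - a n * f n k₂ := by
    intro n
    have h1 := hk₁ n
    have h2 := hk₂ n
    by_cases h : 0 ≤ a n
    · rw [hε] at h1 h2
      simp [h] at h1 h2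
      rw [abs_of_nonneg h, ← mul_sub]
      calc δ * a n = a n * δ := mul_comm _ _
        _ ≤ a n * (f n k₁ - f n k₂) := by
            apply mul_le_mul_of_nonneg_left _ h
            linarith
    · rw [hε] at h1 h2
      simp [h] at h1 h2
      push_neg at h
      rw [abs_of_neg h, ← mul_sub]
      have : f n k₁ - f n k₂ ≤ -δ := by linarith
      calc δ * -a n = a n * (-δ) := by ring
        _ ≤ a n * (f n k₁ - f n k₂) := by
            exact mul_le_mul_of_nonpos_left this h.le
  have hsum : δ * ∑ n : Fin m, |a n| ≤
      (∑ n : Fin m, a n * f n k₁) - ∑ n : Fin m, a n * f n k₂ := by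
    rw [Finset.mul_sum, ← Finset.sum_sub_distrib]
    exact Finset.sum_le_sum fun n _ => key n
  set S₁ := ∑ n : Fin m, a n * f n k₁
  set S₂ := ∑ n : Fin m, a n * f n k₂
  have habs : δ * ∑ n : Fin m, |a n| ≤ |S₁| + |S₂| := by
    calc δ * ∑ n : Fin m, |a n| ≤ S₁ - S₂ := hsum
      _ ≤ |S₁| + |S₂| := by
          have := abs_sub S₁ S₂
          have h1 := le_abs_self (S₁ - S₂)
          have h2 := abs_sub_abs_le_abs_sub S₁ S₂
          calc S₁ - S₂ ≤ |S₁ - S₂| := h1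
            _ ≤ |S₁| + |S₂| := abs_sub _ _
  rcases le_total |S₁| |S₂| with h | h
  · exact ⟨k₂, by linarith⟩
  · exact ⟨k₁, by linarith⟩
end

section
/- For the Schreier sequence $(x_n)$ on $\mathcal{F}_1 = \{F \subset \mathbb{N} : \min F \ge \mathrm{card}\, F\} \cup \{\emptyset\}$, defined by $x_n(F) = 1_F(n)$, no subsequence satisfies the Banach–Saks property: for every infinite $L \subset \mathbb{N}$, if $L_k$ denotes the set of the first $k$ elements of $L$, then $\sup_{F \in \mathcal{F}_1} |\sum_{n \in L_k \cap F} 1| \ge (k-1)/2$ for all $k$, so the Cesàro means $\frac{1}{k}\sum_{n \in L_k} x_n$ do not tend to $0$ in the sup norm. -/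
open scoped Classical in
/-- No subsequence of the Schreier sequence has the Banach–Saks
property: for every infinite `L ⊆ ℕ`, letting `L_k` be the first `k` elements
of `L`, there is a Schreier set `F` with `card (L_k ∩ F) ≥ (k-1)/2`; hence the
Cesàro means of `(x_n)_{n ∈ L}` have sup norm bounded below. -/
theorem stmt_6 (L : Set ℕ) (hL : L.Infinite) (k : ℕ) :
    ∃ F : Finset ℕ, (∀ h : F.Nonempty, F.card ≤ F.min' h) ∧
      k - 1 ≤ 2 * (((Finset.range k).image (Nat.nth (· ∈ L))).filter
        (fun n => n ∈ F)).card := by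
  have hmono : StrictMono (Nat.nth (· ∈ L)) := Nat.nth_strictMono hL
  have hinj : Function.Injective (Nat.nth (· ∈ L)) := hmono.injective
  set f := Nat.nth (· ∈ L) with hf
  set m := k / 2 with hm
  refine ⟨(Finset.Ico (k - m) k).image f, ?_, ?_⟩
  · intro h
    rw [Finset.card_image_of_injective _ hinj, Nat.card_Ico]
    obtain ⟨i, hi, hie⟩ := Finset.mem_image.mp (Finset.min'_mem _ h)
    rw [Finset.mem_Ico] at hi
    calc k - (k - m) ≤ k - m := by omega
      _ ≤ i := hi.1
      _ ≤ f i := hmono.le_apply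
      _ = _ := hie
  · have hsub : (Finset.Ico (k - m) k).image f ⊆ (Finset.range k).image f := by
      apply Finset.image_subset_image
      intro i hi
      rw [Finset.mem_Ico] at hi
      exact Finset.mem_range.mpr hi.2
    rw [Finset.filter_mem_eq_inter, Finset.inter_eq_right.mpr hsub,
      Finset.card_image_of_injective _ hinj, Nat.card_Ico]
    omega
end

section
/- Let $(x_n)$ be a weakly null sequence of nonzero indicator functions of clopen sets on a compact metric space $K$. Then $(x_n)$ is a 1-suppression unconditional basic sequence if and only if the associated tree $\mathcal{T} = \bigcup_n \{(\epsilon_1,\ldots,\epsilon_n) \in \{-1,1\}^n : \bigcap_{i=1}^n (\mathrm{supp}\, x_i)^{\epsilon_i} \ne \emptyset\}$ is weakly independent, i.e., whenever $(\epsilon_1,\ldots,\epsilon_j) \in \mathcal{T}$ and $(\epsilon'_1,\ldots,\epsilon'_j)$ satisfies $\epsilon'_i = -1$ whenever $\epsilon_i = -1$ (and $\epsilon'_i \in \{-1,1\}$ otherwise), then $(\epsilon'_1,\ldots,\epsilon'_j) \in \mathcal{T}$. -/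
/-!
Since the `x i` take only the values `0` and `1`, the value of `∑ a i • x i` at a point depends only
on the pattern of that point. If patterns can always be switched off coordinatewise, then for any
point `p` one can switch off, outside `G`, exactly the coordinates whose term has the sign opposite
to `v = ∑_{i ∈ G} a i x i p`: at the resulting point `q` the full sum is `v` plus terms of the sign of
`v`, so `|v| ≤ |∑_{i ∈ s} a i x i q|`. Conversely, if a pattern below a realized one is missed,
let `G` be its support: the coefficients `1` on `G` and `-1/(#s + 1)` off `G` give a `G`-part of
norm `#G` (at a point realizing the larger pattern), while at every point either a coordinate in
`G` vanishes or one off `G` equals one, which bounds the full sum by `#G - 1/(#s + 1)`. For the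
empty pattern, the next function `x n`, which is nonzero, plays the role of `G`.
-/

open Finset

section

variable {ι K : Type*}

def IsSuppressionUnconditional {E : Type*} [SeminormedAddCommGroup E] [Module ℝ E]
    (x : ι → E) : Prop :=
  ∀ (a : ι → ℝ) (s G : Finset ι), G ⊆ s → ‖∑ n ∈ G, a n • x n‖ ≤ ‖∑ n ∈ s, a n • x n‖

def IsWeaklyIndependentTree (x : ℕ → K → ℝ) : Prop :=
  ∀ (n : ℕ) (ε ε' : Fin n → Bool),
    (∃ k : K, ∀ i : Fin n, (x i k = 1 ↔ ε i = true)) →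
    (∀ i, ε' i = true → ε i = true) →
    (∃ k : K, ∀ i : Fin n, (x i k = 1 ↔ ε' i = true))

def PatternsDownwardClosedOn (x : ι → K → ℝ) (s : Finset ι) : Prop :=
  ∀ (p : K) (P : ι → Prop), ∃ q, ∀ i ∈ s, (x i q = 1 ↔ x i p = 1 ∧ P i)

theorem IsWeaklyIndependentTree.patternsDownwardClosedOn {x : ℕ → K → ℝ}
    (hx : IsWeaklyIndependentTree x) (s : Finset ℕ) : PatternsDownwardClosedOn x s := by
  classical
  intro p P
  obtain ⟨n, hsn⟩ := s.exists_nat_subset_range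
  obtain ⟨q, hq⟩ := hx n (fun i => decide (x i p = 1))
    (fun i => decide (x i p = 1 ∧ (↑i ∈ s → P i))) ⟨p, fun i => by simp⟩ (fun i => by simp_all)
  refine ⟨q, fun i hi => ?_⟩
  have := hq ⟨i, mem_range.1 (hsn hi)⟩
  simp_all

theorem abs_le_abs_add_of_mul_nonneg {v t : ℝ} (h : 0 ≤ t * v) : |v| ≤ |v + t| := by
  rcases mul_nonneg_iff.1 h with ⟨ht, hv⟩ | ⟨ht, hv⟩
  · rw [abs_of_nonneg hv, abs_of_nonneg (add_nonneg hv ht)]; linarith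
  · rw [abs_of_nonpos hv, abs_of_nonpos (add_nonpos hv ht)]; linarith

theorem PatternsDownwardClosedOn.exists_abs_sum_le {x : ι → K → ℝ} {s G : Finset ι}
    (hx : PatternsDownwardClosedOn x s) (h01 : ∀ i k, x i k = 0 ∨ x i k = 1) (hGs : G ⊆ s)
    (a : ι → ℝ) (p : K) : ∃ q, |∑ i ∈ G, a i * x i p| ≤ |∑ i ∈ s, a i * x i q| := by
  classical
  set v := ∑ i ∈ G, a i * x i p
  -- keep the pattern of `p` on `G`, and off `G` only the coordinates whose term has the sign of `v`
  obtain ⟨q, hq⟩ := hx p fun i => i ∈ G ∨ 0 ≤ a i * v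
  have hG : ∀ i ∈ G, x i q = x i p := fun i hi => by
    have := hq i (hGs hi)
    rcases h01 i q with h | h <;> rcases h01 i p with h' | h' <;> simp_all
  have hout : ∀ i ∈ s \ G, 0 ≤ a i * x i q * v := fun i hi => by
    rw [mem_sdiff] at hi
    rcases h01 i q with h | h
    · simp [h]
    · rw [h, mul_one]
      exact ((hq i hi.1).1 h).2.resolve_left hi.2
  refine ⟨q, ?_⟩
  rw [← sum_sdiff hGs, add_comm, sum_congr rfl fun i hi => by rw [hG i hi]]
  exact abs_le_abs_add_of_mul_nonneg (sum_mul (s \ G) _ v ▸ sum_nonneg hout)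

theorem PatternsDownwardClosedOn.norm_sum_le [TopologicalSpace K] [CompactSpace K]
    {x : ι → C(K, ℝ)} {s G : Finset ι} (hx : PatternsDownwardClosedOn (fun i => ⇑(x i)) s)
    (h01 : ∀ i k, x i k = 0 ∨ x i k = 1) (hGs : G ⊆ s) (a : ι → ℝ) :
    ‖∑ i ∈ G, a i • x i‖ ≤ ‖∑ i ∈ s, a i • x i‖ := by
  refine (ContinuousMap.norm_le _ (norm_nonneg _)).2 fun p => ?_
  obtain ⟨q, hq⟩ := hx.exists_abs_sum_le h01 hGs a p
  have hnorm := ContinuousMap.norm_coe_le_norm (∑ i ∈ s, a i • x i) q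
  simp only [ContinuousMap.coe_sum, ContinuousMap.coe_smul, Finset.sum_apply, Pi.smul_apply,
    smul_eq_mul, Real.norm_eq_abs] at hnorm ⊢
  exact hq.trans hnorm

theorem abs_sum_ite_mul_le [DecidableEq ι] {y : ι → ℝ} {s G : Finset ι} {c : ℝ}
    (hy : ∀ i, y i = 0 ∨ y i = 1) (hGs : G ⊆ s) (hG : G.Nonempty) (hc0 : 0 ≤ c)
    (hc : c * (#s + 1) ≤ 1) (hpat : (∀ i ∈ G, y i = 1) → ∃ i ∈ s \ G, y i ≠ 0) :
    |∑ i ∈ s, (if i ∈ G then 1 else -c) * y i| ≤ #G - c := by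
  have hy0 : ∀ i, 0 ≤ y i := fun i => by rcases hy i with h | h <;> simp [h]
  have hy1 : ∀ i, y i ≤ 1 := fun i => by rcases hy i with h | h <;> simp [h]
  have hsplit : ∑ i ∈ s, (if i ∈ G then 1 else -c) * y i
      = ∑ i ∈ G, y i - c * ∑ i ∈ s \ G, y i := by
    rw [← sum_sdiff hGs, add_comm, mul_sum, sub_eq_add_neg, ← sum_neg_distrib]
    congr 1
    · exact sum_congr rfl fun i hi => by simp [hi]
    · exact sum_congr rfl fun i hi => by simp [(mem_sdiff.1 hi).2]
  have hA0 : 0 ≤ ∑ i ∈ G, y i := sum_nonneg fun i _ => hy0 i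
  have hAm : ∑ i ∈ G, y i ≤ #G := (sum_le_sum fun i _ => hy1 i).trans (by simp)
  have hB0 : 0 ≤ ∑ i ∈ s \ G, y i := sum_nonneg fun i _ => hy0 i
  have hBs : ∑ i ∈ s \ G, y i ≤ #s := (sum_le_sum fun i _ => hy1 i).trans <| by
    simpa using card_le_card (sdiff_subset (s := s) (t := G))
  have hm : (1 : ℝ) ≤ #G := by exact_mod_cast hG.card_pos
  have hdich : ∑ i ∈ G, y i ≤ #G - 1 ∨ 1 ≤ ∑ i ∈ s \ G, y i := by
    by_cases hall : ∀ i ∈ G, y i = 1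
    · obtain ⟨i, hi, hyi⟩ := hpat hall
      exact .inr ((hy i).resolve_left hyi ▸ single_le_sum (fun j _ => hy0 j) hi)
    · push Not at hall
      obtain ⟨i, hi, hyi⟩ := hall
      have : 1 - y i ≤ ∑ j ∈ G, (1 - y j) :=
        single_le_sum (f := fun j => 1 - y j) (fun j _ => sub_nonneg.2 (hy1 j)) hi
      rw [sum_sub_distrib, (hy i).resolve_right hyi] at this
      simp only [sum_const, nsmul_eq_mul, mul_one] at this
      left; linarith
  rw [hsplit, abs_le]
  constructor <;> rcases hdich with h | h <;> nlinarith

theorem IsSuppressionUnconditional.exists_eq_one_and_eq_zero [DecidableEq ι] [TopologicalSpace K]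
    [CompactSpace K] {x : ι → C(K, ℝ)} (hx : IsSuppressionUnconditional x)
    (h01 : ∀ i k, x i k = 0 ∨ x i k = 1) {s G : Finset ι} (hGs : G ⊆ s) (hG : G.Nonempty)
    {k₀ : K} (hk₀ : ∀ i ∈ G, x i k₀ = 1) :
    ∃ p, (∀ i ∈ G, x i p = 1) ∧ ∀ i ∈ s \ G, x i p = 0 := by
  by_contra! hpat
  set c : ℝ := 1 / (#s + 1)
  have hc0 : 0 < c := by positivity
  have hc : c * (#s + 1) = 1 := one_div_mul_cancel (by positivity)
  have hm : 1 ≤ (#G : ℝ) := by exact_mod_cast hG.card_pos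
  have hcm : c ≤ #G := by nlinarith [(#s).cast_nonneg (α := ℝ)]
  set a : ι → ℝ := fun i => if i ∈ G then 1 else -c
  have hlow : (#G : ℝ) ≤ ‖∑ i ∈ G, a i • x i‖ := by
    have hval : (∑ i ∈ G, a i • x i) k₀ = #G := by
      simp only [ContinuousMap.coe_sum, ContinuousMap.coe_smul, Finset.sum_apply, Pi.smul_apply,
        smul_eq_mul]
      rw [card_eq_sum_ones, Nat.cast_sum]
      exact sum_congr rfl fun i hi => by simp [a, hi, hk₀ i hi]
    simpa [hval] using ContinuousMap.norm_coe_le_norm (∑ i ∈ G, a i • x i) k₀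
  have hup : ‖∑ i ∈ s, a i • x i‖ ≤ #G - c := by
    refine (ContinuousMap.norm_le _ (sub_nonneg.2 hcm)).2 fun p => ?_
    simp only [ContinuousMap.coe_sum, ContinuousMap.coe_smul, Finset.sum_apply, Pi.smul_apply,
      smul_eq_mul, Real.norm_eq_abs]
    exact abs_sum_ite_mul_le (h01 · p) hGs hG hc0.le hc.le (hpat p)
  linarith [hx a s G hGs]

theorem IsSuppressionUnconditional.isWeaklyIndependentTree [TopologicalSpace K] [CompactSpace K]
    {x : ℕ → C(K, ℝ)} (hx : IsSuppressionUnconditional x)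
    (h01 : ∀ i k, x i k = 0 ∨ x i k = 1) (hone : ∀ i, ∃ k, x i k = 1) :
    IsWeaklyIndependentTree fun i => ⇑(x i) := by
  rintro n ε ε' ⟨k₀, hk₀⟩ hle
  by_cases hε' : ∃ i, ε' i = true
  · set G := (univ.filter (ε' · = true)).map Fin.valEmbedding
    have hmem : ∀ i : Fin n, (i : ℕ) ∈ G ↔ ε' i = true := by simp [G, Fin.val_inj]
    have hGn : G ⊆ range n := by
      intro j hj
      obtain ⟨i, -, rfl⟩ := mem_map.1 hj
      exact mem_range.2 i.isLt
    obtain ⟨p, hp1, hp0⟩ := hx.exists_eq_one_and_eq_zero h01 hGn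
      (let ⟨i, hi⟩ := hε'; ⟨i, (hmem i).2 hi⟩) (k₀ := k₀) fun j hj => by
        obtain ⟨i, hi, rfl⟩ := mem_map.1 hj
        exact (hk₀ i).2 (hle i (mem_filter.1 hi).2)
    refine ⟨p, fun i => ?_⟩
    by_cases hi : ε' i = true
    · simp [hi, hp1 i ((hmem i).2 hi)]
    · simp [hi, hp0 i (mem_sdiff.2 ⟨mem_range.2 i.isLt, mt (hmem i).1 hi⟩)]
  · push Not at hε'
    obtain ⟨k₁, hk₁⟩ := hone n
    obtain ⟨p, -, hp0⟩ := hx.exists_eq_one_and_eq_zero h01 (s := range (n + 1)) (G := {n})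
      (by simp) (singleton_nonempty n) (by simpa using hk₁)
    exact ⟨p, fun i => by simp [hε' i, hp0 i (by simp [i.isLt.ne, i.isLt.trans n.lt_succ_self])]⟩

end

open Filter Topology Classical

theorem stmt_8_general {K : Type*} [MetricSpace K] [CompactSpace K]
    (x : ℕ → C(K, ℝ))
    (hind : ∀ n, ∃ U : Set K, IsClopen U ∧ U.Nonempty ∧
      ∀ k, x n k = if k ∈ U then 1 else 0) :
    (∀ (a : ℕ → ℝ) (s G : Finset ℕ), G ⊆ s →
        ‖∑ n ∈ G, a n • x n‖ ≤ ‖∑ n ∈ s, a n • x n‖) ↔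
    (∀ (n : ℕ) (ε ε' : Fin n → Bool),
        (∃ k : K, ∀ i : Fin n, (x i k = 1 ↔ ε i = true)) →
        (∀ i, ε' i = true → ε i = true) →
        (∃ k : K, ∀ i : Fin n, (x i k = 1 ↔ ε' i = true))) := by
  have h01 : ∀ i k, x i k = 0 ∨ x i k = 1 := fun i k => by
    obtain ⟨U, -, -, hU⟩ := hind i
    rw [hU]
    split_ifs <;> simp
  have hone : ∀ i, ∃ k, x i k = 1 := fun i => by
    obtain ⟨U, -, ⟨k, hk⟩, hU⟩ := hind i
    exact ⟨k, by simp [hU, hk]⟩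
  change IsSuppressionUnconditional x ↔ IsWeaklyIndependentTree fun i => ⇑(x i)
  exact ⟨fun hx => hx.isWeaklyIndependentTree h01 hone,
    fun htree a s G hGs => (htree.patternsDownwardClosedOn s).norm_sum_le h01 hGs a⟩

/-- Rosenthal: a weakly null sequence of nonzero indicator
functions of clopen sets on a compact metric space is a 1-suppression
unconditional basic sequence iff the associated tree of sign patterns is
weakly independent.  A pattern `ε : Fin n → Bool` is in the tree iff some
point of `K` realizes it (`true` = in the support, `false` = in the
complement). -/
theorem stmt_8 {K : Type*} [MetricSpace K] [CompactSpace K]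
    (x : ℕ → C(K, ℝ))
    (hind : ∀ n, ∃ U : Set K, IsClopen U ∧ U.Nonempty ∧
      ∀ k, x n k = if k ∈ U then 1 else 0)
    (hweak : ∀ φ : StrongDual ℝ C(K, ℝ),
      Tendsto (fun n => φ (x n)) atTop (𝓝 0)) :
    (∀ (a : ℕ → ℝ) (s G : Finset ℕ), G ⊆ s →
        ‖∑ n ∈ G, a n • x n‖ ≤ ‖∑ n ∈ s, a n • x n‖) ↔
    (∀ (n : ℕ) (ε ε' : Fin n → Bool),
        (∃ k : K, ∀ i : Fin n, (x i k = 1 ↔ ε i = true)) →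
        (∀ i, ε' i = true → ε i = true) →
        (∃ k : K, ∀ i : Fin n, (x i k = 1 ↔ ε' i = true))) :=
  stmt_8_general x hind
end

section
/- The first Cantor–Bendixson derived set of $\mathcal{F}_{1,n,k} = \{G \subset \mathbb{N} : G \text{ finite}, \min G \ge k, \mathrm{card}\, G \le n\}$ (for $k \ge n \ge 1$), viewed as a subspace of $\{0,1\}^{\mathbb{N}}$ with the product topology, is $\mathcal{F}_{1,n-1,k} = \{G : \min G \ge k, \mathrm{card}\, G \le n-1\}$. Consequently, the $\omega$-th derived set of the Schreier family $\mathcal{F}_1$ is $\{\emptyset\}$, and the $(\omega+1)$-th derived set is empty. -/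
/-- indicator embedding of a family of finite subsets of `ℕ` into `{0,1}^ℕ`. -/
def indFam (𝓐 : Set (Finset ℕ)) : Set (ℕ → Bool) :=
  {x | ∃ F ∈ 𝓐, ∀ m, x m = true ↔ m ∈ F}

/-- `𝓕_{1,n,k}`: finite sets with minimum `≥ k` and cardinality `≤ n`. -/
def F1nk (n k : ℕ) : Set (Finset ℕ) :=
  {F | (∀ m ∈ F, k ≤ m) ∧ F.card ≤ n}

/-- the Schreier family `𝓕₁`. -/
def schreierFam : Set (Finset ℕ) :=
  {F | ∀ h : F.Nonempty, F.card ≤ F.min' h}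

open Filter Topology

lemma mem_indFam_iff (n k : ℕ) (x : ℕ → Bool) :
    x ∈ indFam (F1nk n k) ↔
      (∀ m, x m = true → k ≤ m) ∧
      (∀ s : Finset ℕ, (∀ m ∈ s, x m = true) → s.card ≤ n) := by
  constructor
  · rintro ⟨F, ⟨hmin, hcard⟩, hx⟩
    refine ⟨fun m hm => hmin m ((hx m).1 hm), fun s hs => ?_⟩
    exact le_trans (Finset.card_le_card (fun m hm => (hx m).1 (hs m hm))) hcard
  · rintro ⟨h1, h2⟩
    have hfin : {m | x m = true}.Finite := by
      rcases Set.finite_or_infinite {m | x m = true} with hfin | hinf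
      · exact hfin
      · obtain ⟨t, hts, htc⟩ := hinf.exists_subset_card_eq (n+1)
        have := h2 t (fun m hm => hts hm)
        omega
    refine ⟨hfin.toFinset, ⟨fun m hm => h1 m (by simpa using hm), ?_⟩, fun m => by simp⟩
    exact h2 hfin.toFinset (fun m hm => by simpa using hm)

lemma isClosed_indFam (n k : ℕ) : IsClosed (indFam (F1nk n k)) := by
  have heq : indFam (F1nk n k) =
      (⋂ m, {x : ℕ → Bool | x m = true → k ≤ m}) ∩
      (⋂ s : Finset ℕ, {x : ℕ → Bool | (∀ m ∈ s, x m = true) → s.card ≤ n}) := by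
    ext x
    simp [mem_indFam_iff, Set.mem_iInter]
  rw [heq]
  apply IsClosed.inter
  · apply isClosed_iInter
    intro m
    by_cases h : k ≤ m
    · have : {x : ℕ → Bool | x m = true → k ≤ m} = Set.univ := by ext x; simp [h]
      rw [this]; exact isClosed_univ
    · have : {x : ℕ → Bool | x m = true → k ≤ m} =
          (fun x : ℕ → Bool => x m) ⁻¹' {false} := by
        ext x
        simp only [Set.mem_setOf_eq, Set.mem_preimage, Set.mem_singleton_iff]
        cases x m <;> simp [h]
      rw [this]
      exact (isClosed_discrete {false}).preimage (continuous_apply m)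
  · apply isClosed_iInter
    intro s
    by_cases h : s.card ≤ n
    · have : {x : ℕ → Bool | (∀ m ∈ s, x m = true) → s.card ≤ n} = Set.univ := by
        ext x; simp [h]
      rw [this]; exact isClosed_univ
    · have : {x : ℕ → Bool | (∀ m ∈ s, x m = true) → s.card ≤ n} =
          (⋂ m ∈ s, (fun x : ℕ → Bool => x m) ⁻¹' {true})ᶜ := by
        ext x; simp [h]
      rw [this]
      apply IsOpen.isClosed_compl
      exact isOpen_biInter_finset (fun m _ => (isOpen_discrete {true}).preimage (continuous_apply m))

lemma derivedSet_inter_open {X : Type*} [TopologicalSpace X] {S U : Set X} (hU : IsOpen U) :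
    derivedSet S ∩ U ⊆ derivedSet (S ∩ U) := by
  rintro x ⟨hx, hxU⟩
  rw [mem_derivedSet, accPt_iff_nhds] at hx ⊢
  intro V hV
  obtain ⟨y, ⟨⟨hyV, hyU⟩, hyS⟩, hyx⟩ := hx (V ∩ U) (Filter.inter_mem hV (hU.mem_nhds hxU))
  exact ⟨y, ⟨hyV, hyS, hyU⟩, hyx⟩

lemma derivedSet_singleton {X : Type*} [TopologicalSpace X] [T1Space X] (a : X) :
    derivedSet ({a} : Set X) = ∅ := by
  ext x
  simp only [mem_derivedSet, accPt_iff_nhds, Set.mem_empty_iff_false, iff_false]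
  intro h
  by_cases hxa : x = a
  · obtain ⟨y, ⟨-, hy⟩, hyx⟩ := h Set.univ Filter.univ_mem
    exact hyx (hy.trans hxa.symm)
  · obtain ⟨y, ⟨hyU, hy⟩, -⟩ := h {a}ᶜ (compl_singleton_mem_nhds hxa)
    exact hyU hy

lemma derivedSet_F1nk (n k : ℕ) (hn : 1 ≤ n) :
    derivedSet (indFam (F1nk n k)) = indFam (F1nk (n - 1) k) := by
  apply Set.Subset.antisymm
  · intro x hx
    have hxS : x ∈ indFam (F1nk n k) :=
      (isClosed_indFam n k).closure_subset (derivedSet_subset_closure _ hx)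
    obtain ⟨F, ⟨hFmin, hFcard⟩, hxF⟩ := hxS
    by_cases hc : F.card ≤ n - 1
    · exact ⟨F, ⟨hFmin, hc⟩, hxF⟩
    · exfalso
      rw [mem_derivedSet, accPt_iff_nhds] at hx
      have hUopen : IsOpen {y : ℕ → Bool | ∀ m ∈ F, y m = true} := by
        have : {y : ℕ → Bool | ∀ m ∈ F, y m = true} =
            ⋂ m ∈ F, (fun y : ℕ → Bool => y m) ⁻¹' {true} := by
          ext y; simp
        rw [this]
        exact isOpen_biInter_finset
          (fun m _ => (isOpen_discrete {true}).preimage (continuous_apply m))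
      have hxU : x ∈ {y : ℕ → Bool | ∀ m ∈ F, y m = true} :=
        fun m hm => (hxF m).2 hm
      obtain ⟨y, ⟨hyU, ⟨G, ⟨hGmin, hGcard⟩, hyG⟩⟩, hyx⟩ :=
        hx _ (hUopen.mem_nhds hxU)
      have hFG : F ⊆ G := fun m hm => (hyG m).1 (hyU m hm)
      have hGF : F = G := Finset.eq_of_subset_of_card_le hFG (by omega)
      apply hyx
      funext m
      have h1 : y m = true ↔ x m = true := by rw [hyG m, ← hGF, hxF m]
      cases hy : y m <;> cases hx' : x m <;> simp_all
  · rintro x ⟨G, ⟨hGmin, hGcard⟩, hxG⟩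
    rw [mem_derivedSet, accPt_iff_frequently]
    set M := k + (G.sup id) + 1 with hM
    set yseq : ℕ → ℕ → Bool := fun j m => x m || decide (m = M + j) with hyseq
    have hxnot : ∀ j, x (M + j) = false := by
      intro j
      cases h : x (M + j)
      · rfl
      · exfalso
        have := Finset.le_sup (f := id) ((hxG (M + j)).1 h)
        simp only [id] at this
        omega
    have hne : ∀ j, yseq j ≠ x := by
      intro j h
      have := congrFun h (M + j)
      simp [hyseq, hxnot j] at this
    have hmem : ∀ j, yseq j ∈ indFam (F1nk n k) := by
      intro j
      refine ⟨insert (M + j) G, ⟨?_, ?_⟩, ?_⟩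
      · intro m hm
        rcases Finset.mem_insert.1 hm with h | h
        · omega
        · exact hGmin m h
      · calc (insert (M + j) G).card ≤ G.card + 1 := Finset.card_insert_le _ _
          _ ≤ n := by omega
      · intro m
        simp only [hyseq, Bool.or_eq_true, decide_eq_true_eq, Finset.mem_insert, hxG m]
        tauto
    have htend : Tendsto yseq atTop (𝓝 x) := by
      rw [tendsto_pi_nhds]
      intro m
      apply Tendsto.congr' (f₁ := fun _ => x m)
      · filter_upwards [Filter.eventually_ge_atTop (m + 1)] with j hj
        have : ¬ (m = M + j) := by omega
        simp [hyseq, this]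
      · exact tendsto_const_nhds
    exact htend.frequently (Filter.Eventually.frequently
      (Filter.Eventually.of_forall fun j => ⟨hne j, hmem j⟩))

lemma indFam_F1nk_zero (k : ℕ) :
    indFam (F1nk 0 k) = {fun _ => false} := by
  ext x
  constructor
  · rintro ⟨F, ⟨-, hcard⟩, hxF⟩
    have hF : F = ∅ := Finset.card_eq_zero.1 (Nat.le_zero.1 hcard)
    have : x = fun _ => false := by
      funext m
      have := hxF m
      rw [hF] at this
      simp only [Finset.notMem_empty, iff_false] at this
      exact Bool.eq_false_iff.2 (fun h => this h)
    exact this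
  · rintro rfl
    exact ⟨∅, ⟨by simp, by simp⟩, by simp⟩

lemma iter_derivedSet_F1nk (i n k : ℕ) (h : i ≤ n) :
    derivedSet^[i] (indFam (F1nk n k)) = indFam (F1nk (n - i) k) := by
  induction i generalizing n with
  | zero => simp
  | succ i ih =>
    have he : n - 1 - i = n - (i + 1) := by omega
    rw [Function.iterate_succ_apply, derivedSet_F1nk n k (by omega), ih (n - 1) (by omega), he]

lemma iter_derivedSet_F1nk_empty (n k : ℕ) :
    derivedSet^[n + 1] (indFam (F1nk n k)) = ∅ := by
  rw [Function.iterate_succ_apply', iter_derivedSet_F1nk n n k le_rfl, Nat.sub_self,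
    indFam_F1nk_zero, derivedSet_singleton]

lemma iter_derivedSet_mono {X : Type*} [TopologicalSpace X] (j : ℕ) {A B : Set X} (h : A ⊆ B) :
    derivedSet^[j] A ⊆ derivedSet^[j] B := by
  induction j generalizing A B with
  | zero => simpa
  | succ j ih =>
    rw [Function.iterate_succ_apply, Function.iterate_succ_apply]
    exact ih (derivedSet_mono _ _ h)

lemma iter_derivedSet_inter_open {X : Type*} [TopologicalSpace X] {U : Set X} (hU : IsOpen U)
    (j : ℕ) (S : Set X) : derivedSet^[j] S ∩ U ⊆ derivedSet^[j] (S ∩ U) := by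
  induction j generalizing S with
  | zero => simp
  | succ j ih =>
    intro x hx
    rw [Function.iterate_succ_apply'] at hx ⊢
    exact derivedSet_mono _ _ (ih S) (derivedSet_inter_open hU ⟨hx.1, hx.2⟩)

lemma F1nk_subset_schreier (j : ℕ) : indFam (F1nk j j) ⊆ indFam schreierFam := by
  rintro x ⟨F, ⟨hmin, hcard⟩, hxF⟩
  exact ⟨F, fun h => le_trans hcard (hmin _ (F.min'_mem h)), hxF⟩

lemma false_mem_iter (j : ℕ) :
    (fun _ => false) ∈ derivedSet^[j] (indFam schreierFam) := by
  have h1 : derivedSet^[j] (indFam (F1nk j j)) = indFam (F1nk 0 j) := by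
    have := iter_derivedSet_F1nk j j j le_rfl
    simpa using this
  have h2 : (fun _ => false) ∈ derivedSet^[j] (indFam (F1nk j j)) := by
    rw [h1, indFam_F1nk_zero]; rfl
  exact iter_derivedSet_mono j (F1nk_subset_schreier j) h2

lemma schreier_inter : (⋂ j : ℕ, derivedSet^[j] (indFam schreierFam)) = {fun _ => false} := by
  apply Set.Subset.antisymm
  · intro x hx
    simp only [Set.mem_iInter] at hx
    by_contra hne
    have hex : ∃ m, x m = true := by
      by_contra h
      push_neg at h
      exact hne (funext fun m => Bool.eq_false_iff.2 (fun hm => h m hm))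
    set m₀ := Nat.find hex with hm₀
    set U : Set (ℕ → Bool) := {y | y m₀ = true ∧ ∀ i < m₀, y i = false} with hU
    have hUopen : IsOpen U := by
      have : U = ((fun y : ℕ → Bool => y m₀) ⁻¹' {true}) ∩
          ⋂ i ∈ Finset.range m₀, (fun y : ℕ → Bool => y i) ⁻¹' {false} := by
        ext y; simp [hU]
      rw [this]
      exact ((isOpen_discrete {true}).preimage (continuous_apply m₀)).inter
        (isOpen_biInter_finset
          (fun i _ => (isOpen_discrete {false}).preimage (continuous_apply i)))
    have hxU : x ∈ U := by
      refine ⟨Nat.find_spec hex, fun i hi => ?_⟩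
      exact Bool.eq_false_iff.2 (Nat.find_min hex hi)
    have hsub : indFam schreierFam ∩ U ⊆ indFam (F1nk m₀ m₀) := by
      rintro y ⟨⟨F, hF, hyF⟩, hy1, hy2⟩
      have hm₀F : m₀ ∈ F := (hyF m₀).1 hy1
      have hFn : F.Nonempty := ⟨m₀, hm₀F⟩
      have hge : ∀ m ∈ F, m₀ ≤ m := by
        intro m hm
        by_contra hlt
        have := hy2 m (by omega)
        rw [Bool.eq_false_iff] at this
        exact this ((hyF m).2 hm)
      refine ⟨F, ⟨hge, ?_⟩, hyF⟩
      exact le_trans (hF hFn) (Finset.min'_le F m₀ hm₀F)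
    have : x ∈ derivedSet^[m₀ + 1] (indFam schreierFam ∩ U) :=
      iter_derivedSet_inter_open hUopen (m₀ + 1) _ ⟨hx (m₀ + 1), hxU⟩
    have : x ∈ derivedSet^[m₀ + 1] (indFam (F1nk m₀ m₀)) :=
      iter_derivedSet_mono (m₀ + 1) hsub this
    rw [iter_derivedSet_F1nk_empty] at this
    exact this
  · rintro x rfl
    exact Set.mem_iInter.2 (fun j => false_mem_iter j)

/-- the Cantor–Bendixson derived set of `𝓕_{1,n,k}` (for
`k ≥ n ≥ 1`) is `𝓕_{1,n-1,k}`; consequently the `ω`-th derived set of the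
Schreier family `𝓕₁` is `{∅}` and the `(ω+1)`-th derived set is empty. -/
theorem stmt_10 :
    (∀ n k : ℕ, 1 ≤ n → n ≤ k →
      derivedSet (indFam (F1nk n k)) = indFam (F1nk (n - 1) k)) ∧
    (⋂ j : ℕ, derivedSet^[j] (indFam schreierFam)) = {fun _ => false} ∧
    derivedSet (⋂ j : ℕ, derivedSet^[j] (indFam schreierFam)) = ∅ := by
  refine ⟨fun n k hn _ => derivedSet_F1nk n k hn, schreier_inter, ?_⟩
  rw [schreier_inter, derivedSet_singleton]
end

section
/- Define inductively families of finite subsets of $\mathbb{N}$: $\mathcal{F}_0 = \{\{n\} : n \in \mathbb{N}\} \cup \{\emptyset\}$, and for each countable ordinal $\alpha \ge 1$, with $\alpha_i = \alpha - 1$ for all $i$ if $\alpha$ is a successor and $\alpha_i \uparrow \alpha$ a fixed sequence if $\alpha$ is a limit, let $\mathcal{F}_\alpha = \bigcup_{n=1}^\infty \{F_1 \cup \cdots \cup F_n : F_i \in \mathcal{F}_{\alpha_i}, \; n \le F_1 < F_2 < \cdots < F_n\}$ (where $F < G$ means $\max F < \min G$ for nonempty sets and $n \le F_1$ means $n \le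 \min F_1$). Then each $\mathcal{F}_\alpha$ is adequate: $F \in \mathcal{F}_\alpha$ and $G \subset F$ implies $G \in \mathcal{F}_\alpha$. -/
/-- Admissible unions of blocks: sets of the form `F₁ ∪ ⋯ ∪ F_n` with
`F_i ∈ F (g i)`, `n ≤ F₁ < F₂ < ⋯ < F_n` (conditions read on nonempty blocks,
equivalently every element is `≥ n` and blocks come in increasing order). -/
def schreierComb (F : Ordinal → Set (Finset ℕ)) (g : ℕ → Ordinal) :
    Set (Finset ℕ) :=
  {S | ∃ n : ℕ, 1 ≤ n ∧ ∃ f : Fin n → Finset ℕ,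
    (∀ i : Fin n, f i ∈ F (g i.val)) ∧
    (∀ i : Fin n, ∀ m ∈ f i, n ≤ m) ∧
    (∀ i j : Fin n, i < j → ∀ a ∈ f i, ∀ b ∈ f j, a < b) ∧
    S = Finset.univ.biUnion f}

/-- A system of generalized Schreier families `𝓕_α` for countable `α`:
`𝓕₀` is the singletons together with `∅`; for a successor `β+1` one uses the
constant sequence `α_i = β`; for a limit `α` a fixed strictly increasing
sequence `α_i ↑ α`. -/
def SchreierSystem (F : Ordinal → Set (Finset ℕ)) : Prop :=
  F 0 = insert ∅ {S : Finset ℕ | ∃ n : ℕ, S = {n}} ∧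
  (∀ β : Ordinal, (β + 1).card ≤ Cardinal.aleph0 →
    F (β + 1) = schreierComb F (fun _ => β)) ∧
  (∀ α : Ordinal, α.card ≤ Cardinal.aleph0 → Order.IsSuccLimit α →
    ∃ g : ℕ → Ordinal, StrictMono g ∧ (∀ i, g i < α) ∧ (⨆ i, g i) = α ∧
      F α = schreierComb F g)

/-!
Transfinite induction on `α`. Adequacy is `IsLowerSet` for the order `⊆` on `Finset ℕ`.
`𝓕₀` is clearly adequate, and if `G ⊆ F₁ ∪ ⋯ ∪ F_n` is an admissible union, then
`G = (F₁ ∩ G) ∪ ⋯ ∪ (F_n ∩ G)` is again one: each `F_i ∩ G` lies in `𝓕_{α_i}` by the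
induction hypothesis, and the conditions `n ≤ F₁ < ⋯ < F_n` survive shrinking the blocks.
-/

theorem isLowerSet_insert_empty_singletons :
    IsLowerSet (insert ∅ {S : Finset ℕ | ∃ n : ℕ, S = {n}}) := by
  rintro S G hGS (rfl | ⟨n, rfl⟩)
  · exact Or.inl (Finset.subset_empty.1 hGS)
  · rcases Finset.subset_singleton_iff.1 hGS with rfl | rfl
    · exact Or.inl rfl
    · exact Or.inr ⟨n, rfl⟩

theorem isLowerSet_schreierComb {F : Ordinal → Set (Finset ℕ)} {g : ℕ → Ordinal}
    (hF : ∀ i, IsLowerSet (F (g i))) : IsLowerSet (schreierComb F g) := by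
  rintro _ G hG ⟨n, hn, f, hf, hmin, hlt, rfl⟩
  refine ⟨n, hn, fun i => f i ∩ G, fun i => hF i Finset.inter_subset_left (hf i),
    fun i m hm => hmin i m (Finset.mem_of_mem_inter_left hm),
    fun i j hij a ha b hb =>
      hlt i j hij a (Finset.mem_of_mem_inter_left ha) b (Finset.mem_of_mem_inter_left hb), ?_⟩
  rw [← Finset.biUnion_inter, Finset.inter_eq_right.2 hG]

theorem SchreierSystem.isLowerSet {F : Ordinal → Set (Finset ℕ)} (hF : SchreierSystem F)
    (α : Ordinal) (hα : α.card ≤ Cardinal.aleph0) : IsLowerSet (F α) := by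
  obtain ⟨h0, hsucc, hlim⟩ := hF
  induction α using WellFoundedLT.induction with
  | ind α IH =>
    have IH' : ∀ β < α, IsLowerSet (F β) := fun β hβ =>
      IH β hβ ((Ordinal.card_le_card hβ.le).trans hα)
    rcases Ordinal.zero_or_succ_or_isSuccLimit α with rfl | ⟨β, rfl⟩ | hα_lim
    · rw [h0]
      exact isLowerSet_insert_empty_singletons
    · rw [Order.succ_eq_add_one] at hα IH' ⊢
      rw [hsucc β hα]
      exact isLowerSet_schreierComb fun _ => IH' β (lt_add_one β)
    · obtain ⟨g, -, hg_lt, -, hFα⟩ := hlim α hα hα_lim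
      rw [hFα]
      exact isLowerSet_schreierComb fun i => IH' (g i) (hg_lt i)

/-- each generalized Schreier family `𝓕_α` is adequate. -/
theorem stmt_11 (F : Ordinal → Set (Finset ℕ)) (hF : SchreierSystem F) :
    ∀ α : Ordinal, α.card ≤ Cardinal.aleph0 →
      ∀ S ∈ F α, ∀ G ⊆ S, G ∈ F α :=
  fun α hα _ hS _ hGS => hF.isLowerSet α hα hGS hS
end

section
/- With the generalized Schreier families $\mathcal{F}_\alpha$ defined inductively ($\mathcal{F}_0$ = singletons plus $\emptyset$; $\mathcal{F}_\alpha = \bigcup_n \{F_1 \cup \cdots \cup F_n : F_i \in \mathcal{F}_{\alpha_i}, n \le F_1 < \cdots < F_n\}$), each $\mathcal{F}_\alpha$, identified with indicator functions in $\{0,1\}^{\mathbb{N}}$, is closed under pointwise limits: if $F_j \in \mathcal{F}_\alpha$ and $1_{F_j} \to 1_F$ pointwise, then $F \in \mathcal{F}_\alpha$. In particular $\mathcal{F}_\alpha$ is a compact metric space. -/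
/-!
Transfinite induction shows that every family contains `∅` and is closed. An admissible union
of `n` blocks is the image of a closed, hence compact, set of `n`-tuples of indicator functions
under the continuous union map, so for fixed `n` these unions form a closed set. A point `x`
with `x m = true` has the neighbourhood `{y | y m = true}`, which meets only the unions of
`n ≤ m` blocks, because all their elements are `≥ n`; so the union over all `n` can only
accumulate at the zero function, i.e. at `∅`, which belongs to the family.
-/

open Topology

theorem isClosed_iUnion_of_finite_meets {X ι : Type*} [TopologicalSpace X] {K : ι → Set X}
    (hK : ∀ i, IsClosed (K i))
    (hfin : ∀ x ∉ ⋃ i, K i, ∃ U ∈ 𝓝 x, {i | (U ∩ K i).Nonempty}.Finite) :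
    IsClosed (⋃ i, K i) := by
  rw [← isOpen_compl_iff, isOpen_iff_mem_nhds]
  intro x hx
  obtain ⟨U, hU, hUfin⟩ := hfin x hx
  have hC : IsClosed (⋃ i ∈ {i | (U ∩ K i).Nonempty}, K i) :=
    hUfin.isClosed_biUnion fun i _ => hK i
  have hxC : x ∉ ⋃ i ∈ {i | (U ∩ K i).Nonempty}, K i :=
    fun h => hx (Set.iUnion₂_subset_iUnion _ _ h)
  filter_upwards [hU, hC.isOpen_compl.mem_nhds hxC] with y hyU hyC
  simp only [Set.mem_compl_iff, Set.mem_iUnion, not_exists] at hyC ⊢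
  exact fun i hi => hyC i ⟨y, hyU, hi⟩ hi

section

variable {F : Ordinal → Set (Finset ℕ)} {g : ℕ → Ordinal} {n : ℕ}

def blockTuples (F : Ordinal → Set (Finset ℕ)) (g : ℕ → Ordinal) (n : ℕ) :
    Set (Fin n → ℕ → Bool) :=
  {t | (∀ i : Fin n, t i ∈ indFam (F (g i))) ∧ (∀ i, ∀ m < n, t i m = false) ∧
    ∀ i j, i < j → ∀ a b, t i a = true → t j b = true → a < b}

def blockUnion (t : Fin n → ℕ → Bool) : ℕ → Bool :=
  fun m => decide (∃ i, t i m = true)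

theorem continuous_blockUnion : Continuous (blockUnion (n := n)) :=
  continuous_pi fun m =>
    (continuous_of_discreteTopology (f := fun v : Fin n → Bool => decide (∃ i, v i = true))).comp
      (continuous_pi fun i => (continuous_apply m).comp (continuous_apply i))

theorem isClosed_blockTuples (hcl : ∀ i, IsClosed (indFam (F (g i)))) :
    IsClosed (blockTuples F g n) := by
  simp only [blockTuples, Set.ofPred_and, Set.ofPred_forall]
  refine IsClosed.inter ?_ (IsClosed.inter ?_ ?_)
  · exact isClosed_iInter fun i => (hcl i).preimage (continuous_apply i)
  · exact isClosed_iInter fun i => isClosed_iInter fun m => isClosed_iInter fun _ =>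
      isClosed_eq ((continuous_apply m).comp (continuous_apply i)) continuous_const
  · refine isClosed_iInter fun i => isClosed_iInter fun j => isClosed_iInter fun _ =>
      isClosed_iInter fun a => isClosed_iInter fun b => ?_
    have hopen (k : Fin n) (c : ℕ) : IsOpen {t : Fin n → ℕ → Bool | t k c = true} :=
      (isOpen_discrete {true}).preimage (f := fun t : Fin n → ℕ → Bool => t k c) (by fun_prop)
    exact isClosed_imp (hopen i a) (isClosed_imp (hopen j b) isClosed_const)

theorem isClosed_image_blockTuples (hcl : ∀ i, IsClosed (indFam (F (g i)))) :
    IsClosed (blockUnion '' blockTuples F g n) :=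
  ((isClosed_blockTuples hcl).isCompact.image continuous_blockUnion).isClosed

theorem blockUnion_eq_false {t : Fin n → ℕ → Bool} (ht : t ∈ blockTuples F g n) {m : ℕ}
    (hm : m < n) : blockUnion t m = false := by
  simp [blockUnion, fun i => ht.2.1 i m hm]

theorem indFam_schreierComb :
    indFam (schreierComb F g) = ⋃ n : ℕ, blockUnion '' blockTuples F g (n + 1) := by
  ext x
  simp only [Set.mem_iUnion, Set.mem_image]
  constructor
  · rintro ⟨S, ⟨_, hn, f, hfF, hfmin, hford, rfl⟩, hx⟩
    obtain ⟨n, rfl⟩ := Nat.exists_eq_add_of_le' hn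
    refine ⟨n, fun i m => decide (m ∈ f i), ⟨fun i => ⟨f i, hfF i, by simp⟩, ?_, ?_⟩, ?_⟩
    · intro i m hm
      simpa using fun h => (hm.trans_le (hfmin i m h)).false
    · intro i j hij a b ha hb
      simp only [decide_eq_true_eq] at ha hb
      exact hford i j hij a ha b hb
    · ext m
      exact Bool.eq_iff_iff.2 (by simp [blockUnion, hx])
  · rintro ⟨n, t, ⟨htF, htmin, htord⟩, rfl⟩
    choose f hfF hf using htF
    refine ⟨Finset.univ.biUnion f, ⟨n + 1, Nat.le_add_left 1 n, f, hfF, ?_, ?_, rfl⟩, ?_⟩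
    · intro i m hm
      by_contra! h
      simpa [(hf i m).2 hm] using htmin i m h
    · exact fun i j hij a ha b hb => htord i j hij a b ((hf i a).2 ha) ((hf j b).2 hb)
    · simp [blockUnion, hf]

theorem empty_mem_schreierComb (h : ∅ ∈ F (g 0)) : ∅ ∈ schreierComb F g :=
  ⟨1, le_rfl, fun _ => ∅, fun i => by simpa [Fin.val_eq_zero i] using h, by simp, by simp, by simp⟩

theorem isClosed_indFam_schreierComb (hcl : ∀ i, IsClosed (indFam (F (g i))))
    (hempty : ∅ ∈ F (g 0)) : IsClosed (indFam (schreierComb F g)) := by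
  have hzero : (fun _ => false) ∈ indFam (schreierComb F g) :=
    ⟨∅, empty_mem_schreierComb hempty, by simp⟩
  rw [indFam_schreierComb] at hzero ⊢
  refine isClosed_iUnion_of_finite_meets (fun n => isClosed_image_blockTuples hcl) ?_
  intro x hx
  obtain ⟨m, hm⟩ : ∃ m, x m = true := by
    by_contra! h
    obtain rfl : x = fun _ => false := funext fun m => by simpa using h m
    exact hx hzero
  have hopen : IsOpen {y : ℕ → Bool | y m = true} :=
    (isOpen_discrete {true}).preimage (f := fun y : ℕ → Bool => y m) (continuous_apply m)
  refine ⟨{y | y m = true}, hopen.mem_nhds hm, (Set.finite_Iio m).subset ?_⟩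
  rintro n ⟨_, hym, t, ht, rfl⟩
  by_contra h
  simp [blockUnion_eq_false ht (Nat.lt_succ_of_le (not_lt.1 h))] at hym

theorem indFam_singletons_insert_empty :
    indFam (insert ∅ {S : Finset ℕ | ∃ n, S = {n}}) =
      {x | ∀ a b, x a = true → x b = true → a = b} := by
  ext x
  constructor
  · rintro ⟨S, rfl | ⟨n, rfl⟩, hx⟩ a b ha hb
    · simp [hx] at ha
    · simp only [hx, Finset.mem_singleton] at ha hb
      rw [ha, hb]
  · intro hx
    by_cases h : ∃ m, x m = true
    · obtain ⟨m, hm⟩ := h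
      exact ⟨{m}, Set.mem_insert_of_mem _ ⟨m, rfl⟩,
        fun a => by simpa using ⟨fun ha => hx a m ha hm, fun ha => ha ▸ hm⟩⟩
    · push Not at h
      exact ⟨∅, Set.mem_insert _ _, by simpa using h⟩

theorem isClosed_indFam_singletons_insert_empty :
    IsClosed (indFam (insert ∅ {S : Finset ℕ | ∃ n, S = {n}})) := by
  rw [indFam_singletons_insert_empty]
  simp only [Set.ofPred_forall]
  exact isClosed_iInter fun a => isClosed_iInter fun b =>
    (isClosed_discrete {p : Bool × Bool | p.1 = true → p.2 = true → a = b}).preimage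
      (f := fun x : ℕ → Bool => (x a, x b)) (by fun_prop)

open Cardinal in
theorem SchreierSystem.exists_eq_schreierComb (hF : SchreierSystem F) {α : Ordinal}
    (hα : α.card ≤ ℵ₀) (hα0 : α ≠ 0) :
    ∃ g : ℕ → Ordinal, (∀ i, g i < α) ∧ F α = schreierComb F g := by
  rcases α.zero_or_succ_or_isSuccLimit with rfl | ⟨β, rfl⟩ | hlim
  · exact absurd rfl hα0
  · rw [Order.succ_eq_add_one] at hα ⊢
    exact ⟨fun _ => β, fun _ => lt_add_one β, hF.2.1 β hα⟩
  · obtain ⟨g, -, hgα, -, hFg⟩ := hF.2.2 α hα hlim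
    exact ⟨g, hgα, hFg⟩

open Cardinal in
theorem SchreierSystem.induction (hF : SchreierSystem F) {P : Set (Finset ℕ) → Prop}
    (zero : P (F 0)) (comb : ∀ g, (∀ i, P (F (g i))) → P (schreierComb F g)) :
    ∀ α : Ordinal, α.card ≤ ℵ₀ → P (F α) := by
  intro α
  induction α using WellFoundedLT.induction with | _ α IH
  intro hα
  rcases eq_or_ne α 0 with rfl | hα0
  · exact zero
  obtain ⟨g, hgα, hFg⟩ := hF.exists_eq_schreierComb hα hα0
  rw [hFg]
  exact comb g fun i => IH (g i) (hgα i) ((Ordinal.card_le_card (hgα i).le).trans hα)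

end

/-- each generalized Schreier family `𝓕_α`, identified with
indicator functions in `{0,1}^ℕ`, is closed under pointwise limits, i.e.
closed (hence compact) in the product topology. -/
theorem stmt_12 (F : Ordinal → Set (Finset ℕ)) (hF : SchreierSystem F) :
    ∀ α : Ordinal, α.card ≤ Cardinal.aleph0 → IsClosed (indFam (F α)) := by
  intro α hα
  refine (hF.induction (P := fun 𝓐 => ∅ ∈ 𝓐 ∧ IsClosed (indFam 𝓐)) ?_ ?_ α hα).2
  · rw [hF.1]
    exact ⟨Set.mem_insert _ _, isClosed_indFam_singletons_insert_empty⟩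
  · exact fun g hg => ⟨empty_mem_schreierComb (hg 0).1,
      isClosed_indFam_schreierComb (fun i => (hg i).2) (hg 0).1⟩
end
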